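/- Let k be a bounded scalar kernel on X with k(x₀,x₀) = 1 for some x₀, let Y be an infinite-dimensional separable Hilbert space, and let K(x,x') = k(x,x')·Id_Y. Then the inclusion ι : H → L²(X, P_X; Y) of the associated vector-valued RKHS is not a compact operator, provided E[k(x₀,X)²] > 0. -/

import Mathlib

/-!
For an orthonormal sequence `(y_n)` of `Y`, the functions `f_n = (ev x₀)† y_n` are bounded in `H`,
and `ι f_n = k(·, x₀) • y_n`, so `‖ι f_i - ι f_j‖² = 2 E[k(x₀, X)²] > 0` for `i ≠ j`.
A uniformly separated sequence has no convergent subsequence, so `ι` maps a bounded set to a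
set that is not relatively compact.
-/

open MeasureTheory ContinuousLinearMap
open scoped RealInnerProductSpace

theorem exists_orthonormal_nat_of_not_finiteDimensional {𝕜 E : Type*} [RCLike 𝕜]
    [NormedAddCommGroup E] [InnerProductSpace 𝕜 E] [CompleteSpace E]
    (h : ¬ FiniteDimensional 𝕜 E) : ∃ v : ℕ → E, Orthonormal 𝕜 v := by
  obtain ⟨w, b, -⟩ := exists_hilbertBasis 𝕜 E
  have : Infinite w := by
    by_contra hfin
    rw [not_infinite_iff_finite] at hfin
    have := Fintype.ofFinite w
    exact h b.toOrthonormalBasis.toBasis.finiteDimensional_of_finite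
  exact ⟨b ∘ Infinite.natEmbedding w, b.orthonormal.comp _ (Infinite.natEmbedding w).injective⟩

theorem IsCompact.not_pairwise_le_dist {F : Type*} [PseudoMetricSpace F] {K : Set F}
    (hK : IsCompact K) {u : ℕ → F} (hu : ∀ n, u n ∈ K) {δ : ℝ} (hδ : 0 < δ) :
    ¬ Pairwise fun i j => δ ≤ dist (u i) (u j) := by
  intro hsep
  obtain ⟨_, _, φ, hφ, hconv⟩ := hK.tendsto_subseq hu
  obtain ⟨N, hN⟩ := Metric.cauchySeq_iff'.mp hconv.cauchySeq δ hδ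
  exact (hsep (hφ N.lt_succ_self).ne').not_gt (hN (N + 1) N.le_succ)

theorem LinearMap.not_isCompactOperator_of_pairwise_le_norm_sub {𝕜 E F : Type*}
    [NontriviallyNormedField 𝕜] [SeminormedAddCommGroup E] [NormedSpace 𝕜 E]
    [NormedAddCommGroup F] [NormedSpace 𝕜 F] (T : E →ₗ[𝕜] F) {u : ℕ → E}
    (hu : Bornology.IsBounded (Set.range u)) {δ : ℝ} (hδ : 0 < δ)
    (hsep : Pairwise fun i j => δ ≤ ‖T (u i) - T (u j)‖) : ¬ IsCompactOperator T := by
  intro hT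
  refine (hT.isCompact_closure_image_of_bounded hu).not_pairwise_le_dist
    (fun n => subset_closure ⟨u n, ⟨n, rfl⟩, rfl⟩) hδ ?_
  simpa only [dist_eq_norm] using hsep

section ReproducingKernel

variable {X H Y : Type*}
    [NormedAddCommGroup H] [InnerProductSpace ℝ H] [CompleteSpace H]
    [NormedAddCommGroup Y] [InnerProductSpace ℝ Y] [CompleteSpace Y]
    {ev : X → H →L[ℝ] Y} {k : X → X → ℝ}

theorem kernel_symm_of_ev_adjoint_eq_smul [Nontrivial Y]
    (hK : ∀ (x x' : X) (y : Y), ev x (adjoint (ev x') y) = k x x' • y) (x x' : X) :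
    k x x' = k x' x := by
  obtain ⟨y, hy⟩ := exists_ne (0 : Y)
  have hinner : ∀ a a', ⟪ev a (adjoint (ev a') y), y⟫ = k a a' * ‖y‖ ^ 2 := fun a a' => by
    rw [hK, real_inner_smul_left, real_inner_self_eq_norm_sq]
  refine mul_right_cancel₀ (pow_ne_zero 2 (norm_ne_zero_iff.mpr hy)) ?_
  rw [← hinner, ← hinner, ← adjoint_inner_right, adjoint_inner_left, real_inner_comm]

theorem norm_inclusion_adjoint_ev_sq [MeasurableSpace X] {μ : Measure X}
    {ι : H →L[ℝ] Lp Y 2 μ}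
    (hK : ∀ (x x' : X) (y : Y), ev x (adjoint (ev x') y) = k x x' • y)
    (hι : ∀ f : H, (ι f : X → Y) =ᵐ[μ] fun x => ev x f) (x₀ : X) (y : Y) :
    ‖ι (adjoint (ev x₀) y)‖ ^ 2 = (∫ x, k x x₀ ^ 2 ∂μ) * ‖y‖ ^ 2 := by
  rw [← real_inner_self_eq_norm_sq, L2.inner_def, ← integral_mul_const]
  refine integral_congr_ae ?_
  filter_upwards [hι (adjoint (ev x₀) y)] with x hx
  rw [hx, hK, real_inner_smul_left, real_inner_smul_right, real_inner_self_eq_norm_sq]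
  ring

end ReproducingKernel

theorem stmt5_general {X H Y : Type*}
    [NormedAddCommGroup H] [InnerProductSpace ℝ H] [CompleteSpace H]
    [NormedAddCommGroup Y] [InnerProductSpace ℝ Y] [CompleteSpace Y]
    (hY : ¬ FiniteDimensional ℝ Y)
    [MeasurableSpace X] (μ : Measure X)
    (ev : X → H →L[ℝ] Y)
    (k : X → X → ℝ)
    (hK : ∀ (x x' : X) (y : Y), ev x (ContinuousLinearMap.adjoint (ev x') y) = k x x' • y)
    (x₀ : X)
    (hpos : 0 < ∫ x, (k x₀ x) ^ 2 ∂μ)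
    (ι : H →L[ℝ] Lp Y 2 μ)
    (hι : ∀ f : H, (ι f : X → Y) =ᵐ[μ] fun x => ev x f) :
    ¬ IsCompactOperator (fun f : H => ι f) := by
  obtain ⟨v, hv⟩ := exists_orthonormal_nat_of_not_finiteDimensional hY
  have : Nontrivial Y := ⟨⟨v 0, 0, hv.ne_zero 0⟩⟩
  have hc : ∫ x, k x x₀ ^ 2 ∂μ = ∫ x, k x₀ x ^ 2 ∂μ := by
    simp_rw [kernel_symm_of_ev_adjoint_eq_smul hK _ x₀]
  have hsep : Pairwise fun i j => √(2 * ∫ x, k x₀ x ^ 2 ∂μ) ≤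
      ‖ι (adjoint (ev x₀) (v i)) - ι (adjoint (ev x₀) (v j))‖ := by
    intro i j hij
    have hdist : ‖v i - v j‖ ^ 2 = 2 := by
      rw [norm_sub_sq_real, hv.1 i, hv.1 j, hv.2 hij]
      norm_num
    rw [← map_sub, ← map_sub, ← sq_le_sq₀ (by positivity) (norm_nonneg _),
      norm_inclusion_adjoint_ev_sq hK hι, hc, hdist, Real.sq_sqrt (by positivity), mul_comm]
  have hbdd : Bornology.IsBounded (Set.range fun n => adjoint (ev x₀) (v n)) :=
    isBounded_iff_forall_norm_le.mpr ⟨‖adjoint (ev x₀)‖, by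
      rintro _ ⟨n, rfl⟩
      simpa only [hv.1 n, mul_one] using le_opNorm (adjoint (ev x₀)) (v n)⟩
  exact (ι : H →ₗ[ℝ] Lp Y 2 μ).not_isCompactOperator_of_pairwise_le_norm_sub hbdd
    (Real.sqrt_pos.mpr (by positivity)) hsep

/-- Let `k` be a bounded scalar kernel with `k(x₀,x₀) = 1`, `Y` an
infinite-dimensional separable Hilbert space, and `K(x,x') = k(x,x')·Id_Y` (expressed
through the evaluation operators by `ev x ((ev x')^* y) = k x x' • y`).  If
`E[k(x₀,X)²] > 0`, then the inclusion `ι : H → L²(X,P_X;Y)` is not a compact operator. -/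
theorem stmt5 {X H Y : Type*}
    [NormedAddCommGroup H] [InnerProductSpace ℝ H] [CompleteSpace H]
    [NormedAddCommGroup Y] [InnerProductSpace ℝ Y] [CompleteSpace Y]
    [TopologicalSpace.SeparableSpace Y]
    (hY : ¬ FiniteDimensional ℝ Y)
    [MeasurableSpace X] (μ : Measure X) [IsProbabilityMeasure μ]
    (ev : X → H →L[ℝ] Y)
    (k : X → X → ℝ) (Cb : ℝ) (hk : ∀ x x' : X, |k x x'| ≤ Cb)
    (hK : ∀ (x x' : X) (y : Y), ev x (ContinuousLinearMap.adjoint (ev x') y) = k x x' • y)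
    (x₀ : X) (hx₀ : k x₀ x₀ = 1)
    (hpos : 0 < ∫ x, (k x₀ x) ^ 2 ∂μ)
    (ι : H →L[ℝ] Lp Y 2 μ)
    (hι : ∀ f : H, (ι f : X → Y) =ᵐ[μ] fun x => ev x f) :
    ¬ IsCompactOperator (fun f : H => ι f) :=
  stmt5_general hY μ ev k hK x₀ hpos ι hι
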